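/- Assume (A1), (A2) and (A3). Let p : ℝ → ℝ^N be a bounded C² solution of the traveling wave system −d_i p_i'' − c p_i' = (M p)_i + p_i − p_i (C p)_i (i = 1,…,N) for some c ∈ ℝ, with min_i inf_ℝ p_i > 0. Then for each i ∈ {1,…,N} the derivative p_i' belongs to L²(ℝ). -/

import Mathlib

open Matrix MeasureTheory

/-- Irreducibility of a matrix: there is no nonempty proper subset `S` of indices with
`M i j = 0` for all `i ∈ S`, `j ∉ S`. -/
def MatrixIrreducible {N : ℕ} (M : Matrix (Fin N) (Fin N) ℝ) : Prop :=
  ∀ S : Finset (Fin N), S.Nonempty → S ≠ Finset.univ → ∃ i ∈ S, ∃ j ∉ S, M i j ≠ 0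

/-!
Along a solution, `G = ∑ᵢ dᵢ pᵢ' (1 - 1/pᵢ) + c (pᵢ - log pᵢ)` has derivative
`G' = ∑ᵢ dᵢ (pᵢ'/pᵢ)² - ∑ᵢ Fᵢ(p) (1 - 1/pᵢ)`, where `F(u) = Mu + u - u ∘ Cu` is the reaction term.
The second sum is nonnegative: it equals `∑ᵢ (Mu)ᵢ/uᵢ + (u - 𝟙)ᵀ C (u - 𝟙)`, the first term is
`≥ 0` by `log x ≤ x - 1` and the zero row and column sums of `M`, and the quadratic form of `C`
is `≥ 0` because the real part of the normal matrix `C` has spectrum `{Re λ}`. As `p` stays in a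
compact subset of `(0, ∞)ᴺ` and `p'` is bounded (integrating factor in each scalar equation), `G`
is bounded, so `∫_{-n}^{n} dₖ (pₖ'/pₖ)² ≤ G(n) - G(-n)` is bounded uniformly in `n`.
-/

open Set Filter

section LinearAlgebra

open scoped ComplexOrder ComplexStarModule

variable {n : Type*} [Fintype n]

open scoped Matrix.Norms.L2Operator in
theorem Matrix.posSemidef_realPart [DecidableEq n] (A : Matrix n n ℂ) [IsStarNormal A]
    (hA : ∀ μ ∈ spectrum ℂ A, 0 ≤ μ.re) : (ℜ A : Matrix n n ℂ).PosSemidef := by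
  rw [posSemidef_iff_isHermitian_and_spectrum_nonneg, spectrum_realPart A]
  refine ⟨(ℜ A).2, ?_⟩
  rintro _ ⟨μ, hμ, rfl⟩
  simpa using hA μ hμ

theorem Matrix.dotProduct_mulVec_nonneg_of_normal [DecidableEq n] (C : Matrix n n ℝ)
    (hC : C * Cᵀ = Cᵀ * C) (hspec : ∀ μ ∈ spectrum ℂ (C.map (algebraMap ℝ ℂ)), 0 ≤ μ.re)
    (q : n → ℝ) : 0 ≤ q ⬝ᵥ C *ᵥ q := by
  set A := C.map (algebraMap ℝ ℂ)
  have hstar : star A = Cᵀ.map (algebraMap ℝ ℂ) := by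
    ext i j
    simp [A]
  have : IsStarNormal A :=
    ⟨by rw [Commute, SemiconjBy, hstar, ← Matrix.map_mul, ← Matrix.map_mul, hC]⟩
  have hre : (ℜ A : Matrix n n ℂ) = ((2 : ℝ)⁻¹ • (C + Cᵀ)).map (algebraMap ℝ ℂ) := by
    rw [realPart_apply_coe, hstar]
    ext i j
    simp [A]
  have hmap : ∀ B : Matrix n n ℝ, star (fun i => (q i : ℂ)) ⬝ᵥ B.map (algebraMap ℝ ℂ) *ᵥ
      (fun i => (q i : ℂ)) = ((q ⬝ᵥ B *ᵥ q : ℝ) : ℂ) := fun B => by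
    simp [dotProduct, mulVec]
  have hsym : q ⬝ᵥ Cᵀ *ᵥ q = q ⬝ᵥ C *ᵥ q := by
    rw [mulVec_transpose, dotProduct_mulVec, dotProduct_comm]
  have h := (posSemidef_realPart A hspec).dotProduct_mulVec_nonneg (fun i => (q i : ℂ))
  rw [hre, hmap, smul_mulVec, add_mulVec, dotProduct_smul, dotProduct_add, hsym, smul_eq_mul,
    ← two_mul, inv_mul_cancel_left₀ two_ne_zero] at h
  exact_mod_cast h

theorem Matrix.sum_mulVec_div_nonneg (M : Matrix n n ℝ) (hM : ∀ i j, i ≠ j → 0 ≤ M i j)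
    (hrow : ∀ i, ∑ j, M i j = 0) (hcol : ∀ j, ∑ i, M i j = 0) (q : n → ℝ) (hq : ∀ i, 0 < q i) :
    0 ≤ ∑ i, (M *ᵥ q) i / q i := by
  have hlog : ∀ i j, M i j * (Real.log (q j) - Real.log (q i)) ≤ M i j * (q j / q i - 1) := by
    intro i j
    rcases eq_or_ne i j with rfl | hij
    · simp [div_self (hq i).ne']
    · refine mul_le_mul_of_nonneg_left ?_ (hM i j hij)
      rw [← Real.log_div (hq j).ne' (hq i).ne']
      exact Real.log_le_sub_one_of_pos (div_pos (hq j) (hq i))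
  have hlog_sum : ∑ i, ∑ j, M i j * (Real.log (q j) - Real.log (q i)) = 0 := by
    simp only [mul_sub, Finset.sum_sub_distrib, ← Finset.sum_mul, hrow, zero_mul, sub_zero]
    rw [Finset.sum_comm]
    simp [← Finset.sum_mul, hcol]
  have hdiv_sum : ∑ i, (M *ᵥ q) i / q i = ∑ i, ∑ j, M i j * (q j / q i - 1) := by
    simp [mulVec, dotProduct, Finset.sum_div, mul_sub, hrow, mul_div_assoc]
  rw [hdiv_sum, ← hlog_sum]
  exact Finset.sum_le_sum fun i _ => Finset.sum_le_sum fun j _ => hlog i j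

def reaction (M C : Matrix n n ℝ) (u : n → ℝ) : n → ℝ :=
  M *ᵥ u + u - u * C *ᵥ u

theorem continuous_reaction (M C : Matrix n n ℝ) : Continuous (reaction M C) := by
  unfold reaction
  fun_prop

theorem sum_reaction_mul_one_sub_inv_nonpos (M C : Matrix n n ℝ)
    (hM : ∀ i j, i ≠ j → 0 ≤ M i j) (hrow : ∀ i, ∑ j, M i j = 0) (hcol : ∀ j, ∑ i, M i j = 0)
    (hC : ∀ v, 0 ≤ v ⬝ᵥ C *ᵥ v) (hC_row : ∀ i, ∑ j, C i j = 1) (q : n → ℝ) (hq : ∀ i, 0 < q i) :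
    ∑ i, reaction M C q i * (1 - (q i)⁻¹) ≤ 0 := by
  have hM_sum : ∑ i, (M *ᵥ q) i = 0 := by
    simp only [mulVec, dotProduct]
    rw [Finset.sum_comm]
    simp [← Finset.sum_mul, hcol]
  have hC_sub : ∀ i, (C *ᵥ q) i - 1 = (C *ᵥ (q - 1)) i := by
    intro i
    simp [mulVec, dotProduct, mul_sub, hC_row]
  have hsplit : ∀ i, reaction M C q i * (1 - (q i)⁻¹)
      = (M *ᵥ q) i - (M *ᵥ q) i / q i - (q - 1) i * (C *ᵥ (q - 1)) i := by
    intro i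
    rw [← hC_sub]
    simp only [reaction, Pi.add_apply, Pi.sub_apply, Pi.mul_apply, Pi.one_apply]
    field_simp [(hq i).ne']
    ring
  rw [Finset.sum_congr rfl fun i _ => hsplit i, Finset.sum_sub_distrib, Finset.sum_sub_distrib,
    hM_sum]
  have := M.sum_mulVec_div_nonneg hM hrow hcol q hq
  have := hC (q - 1)
  rw [dotProduct] at this
  linarith

end LinearAlgebra

theorem IsCompact.exists_forall_norm_comp_le {X E α : Type*} [TopologicalSpace X]
    [SeminormedAddCommGroup E] {s : Set X} (hs : IsCompact s) {Φ : X → E} (hΦ : ContinuousOn Φ s)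
    {g : α → X} (hg : ∀ a, g a ∈ s) : ∃ K, ∀ a, ‖Φ (g a)‖ ≤ K := by
  obtain ⟨K, hK⟩ := hs.exists_bound_of_continuousOn hΦ
  exact ⟨K, fun a => hK _ (hg a)⟩

theorem abs_deriv_le_of_abs_le_of_abs_forcing_le {f : ℝ → ℝ} {d c B K : ℝ} (hd : d ≠ 0)
    (hf : Differentiable ℝ f) (hf' : Differentiable ℝ (deriv f)) (hB : ∀ x, |f x| ≤ B)
    (hK : ∀ x, |d * deriv (deriv f) x + c * deriv f x| ≤ K) (x : ℝ) :
    |deriv f x| ≤ Real.exp |c / d| * (2 * B + K / |d|) := by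
  -- The mean value theorem gives `θ ∈ (x, x + 1)` with `|f' θ| ≤ 2B`, and the integrating
  -- factor `exp (a (y - x))` carries this bound back to `x` at the price of the forcing.
  set a := c / d
  obtain ⟨θ, ⟨hxθ, hθx⟩, hθ⟩ := exists_deriv_eq_slope f (lt_add_one x) hf.continuous.continuousOn
    fun y _ => (hf y).differentiableWithinAt
  have hθB : |deriv f θ| ≤ 2 * B := by
    rw [hθ, add_sub_cancel_left, div_one]
    linarith [abs_sub (f (x + 1)) (f x), hB x, hB (x + 1)]
  set v : ℝ → ℝ := fun y => Real.exp (a * (y - x)) * deriv f y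
  have hexp : ∀ y ∈ Icc x θ, a * (y - x) ≤ |a| := fun y hy => by
    refine (le_abs_self _).trans ?_
    rw [abs_mul, abs_of_nonneg (sub_nonneg.2 hy.1)]
    exact mul_le_of_le_one_right (abs_nonneg a) (by linarith [hy.2])
  have hv : ∀ y, HasDerivAt v
      (Real.exp (a * (y - x)) * ((d * deriv (deriv f) y + c * deriv f y) / d)) y := fun y => by
    refine ((((hasDerivAt_id' y).sub_const x).const_mul a).exp.fun_mul
      (hf' y).hasDerivAt).congr_deriv ?_
    simp only [a]
    field_simp
    ring
  have hvθ : |v θ - v x| ≤ Real.exp |a| * (K / |d|) * (θ - x) := by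
    refine norm_image_sub_le_of_norm_deriv_le_segment' (fun y _ => (hv y).hasDerivWithinAt)
      (fun y hy => ?_) θ ⟨hxθ.le, le_rfl⟩
    rw [Real.norm_eq_abs, abs_mul, abs_div, Real.abs_exp]
    gcongr
    · exact hexp y (Ico_subset_Icc_self hy)
    · exact hK y
  have hK0 : 0 ≤ K := (abs_nonneg _).trans (hK x)
  calc |deriv f x| = |v x| := by simp [v]
    _ ≤ |v θ| + |v θ - v x| := by
      linarith [abs_sub_abs_le_abs_sub (v x) (v θ), abs_sub_comm (v x) (v θ)]
    _ ≤ Real.exp |a| * (2 * B) + Real.exp |a| * (K / |d|) * 1 := by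
      gcongr
      · rw [abs_mul, Real.abs_exp]
        gcongr
        exact hexp θ ⟨hxθ.le, le_rfl⟩
      · exact hvθ.trans (mul_le_mul_of_nonneg_left (by linarith) (by positivity))
    _ = Real.exp |a| * (2 * B + K / |d|) := by ring

theorem integrable_of_le_deriv_of_abs_le {φ G G' : ℝ → ℝ} {B : ℝ} (hφ : Continuous φ)
    (hφ0 : ∀ x, 0 ≤ φ x) (hG : ∀ x, HasDerivAt G (G' x) x) (hφG : ∀ x, φ x ≤ G' x)
    (hGB : ∀ x, |G x| ≤ B) : Integrable φ := by
  refine integrable_of_intervalIntegral_norm_bounded (2 * B)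
    (fun n : ℕ => hφ.integrableOn_Ioc) (tendsto_neg_atTop_atBot.comp tendsto_natCast_atTop_atTop)
    tendsto_natCast_atTop_atTop (Eventually.of_forall fun n => ?_)
  have hn : -(n : ℝ) ≤ n := neg_le_self n.cast_nonneg
  calc ∫ x in -(n : ℝ)..n, ‖φ x‖ = ∫ x in -(n : ℝ)..n, φ x := by
        simp only [Real.norm_eq_abs, abs_of_nonneg (hφ0 _)]
    _ ≤ G n - G (-n) := intervalIntegral.integral_le_sub_of_hasDeriv_right_of_le hn
        (fun x _ => (hG x).continuousAt.continuousWithinAt) (fun x _ => (hG x).hasDerivWithinAt)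
        hφ.integrableOn_Icc (fun x _ => hφG x)
    _ ≤ 2 * B := by linarith [(abs_le.1 (hGB n)).2, (abs_le.1 (hGB (-n))).1]

section TravelingWave

variable {n : Type*} [Fintype n]

noncomputable def lyapunov (d : n → ℝ) (c : ℝ) (u v : n → ℝ) : ℝ :=
  ∑ i, (d i * (v i * (1 - (u i)⁻¹)) + c * (u i - Real.log (u i)))

theorem exists_forall_abs_lyapunov_le {α : Type*} (d : n → ℝ) (c : ℝ) {u v : α → n → ℝ}
    {m B : ℝ} {L : n → ℝ} (hm : 0 < m) (hmu : ∀ a i, m ≤ u a i) (huB : ∀ a i, u a i ≤ B)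
    (hvL : ∀ a i, |v a i| ≤ L i) :
    ∃ K, ∀ a, |lyapunov d c (u a) (v a)| ≤ K := by
  set s : Set ((n → ℝ) × (n → ℝ)) := Icc (fun _ => m) (fun _ => B) ×ˢ Icc (-L) L
  refine (isCompact_Icc.prod isCompact_Icc).exists_forall_norm_comp_le (s := s)
    (Φ := fun uv => lyapunov d c uv.1 uv.2) (g := fun a => (u a, v a)) ?_
    fun a => ⟨⟨hmu a, huB a⟩, fun i => (abs_le.1 (hvL a i)).1, fun i => (abs_le.1 (hvL a i)).2⟩
  refine continuousOn_finsetSum _ fun i _ => ?_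
  have hne : ∀ uv ∈ s, uv.1 i ≠ 0 := fun uv huv => (hm.trans_le (huv.1.1 i)).ne'
  have hu : Continuous fun uv : (n → ℝ) × (n → ℝ) => uv.1 i := by fun_prop
  have hinv := hu.continuousOn.inv₀ hne
  have hlog := hu.continuousOn.log hne
  fun_prop

theorem hasDerivAt_lyapunov (d : n → ℝ) (c : ℝ) {p : ℝ → n → ℝ} {x : ℝ}
    (hp : ∀ i, DifferentiableAt ℝ (fun y => p y i) x)
    (hp' : ∀ i, DifferentiableAt ℝ (deriv fun y => p y i) x) (hx : ∀ i, p x i ≠ 0) :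
    HasDerivAt (fun y => lyapunov d c (p y) fun i => deriv (fun z => p z i) y)
      (∑ i, d i * (deriv (fun y => p y i) x / p x i) ^ 2 + ∑ i,
        (d i * deriv (deriv fun y => p y i) x + c * deriv (fun y => p y i) x) * (1 - (p x i)⁻¹))
      x := by
  rw [← Finset.sum_add_distrib]
  refine HasDerivAt.fun_sum fun i _ => ?_
  have h := (hp i).hasDerivAt
  refine ((hp' i).hasDerivAt.fun_mul ((hasDerivAt_const x 1).fun_sub (h.fun_inv (hx i)))
    |>.const_mul (d i) |>.add ((h.sub (h.log (hx i))).const_mul c)).congr_deriv ?_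
  field_simp [hx i]
  ring

variable {M C : Matrix n n ℝ} {d : n → ℝ} {c : ℝ} {p : ℝ → n → ℝ}

theorem exists_abs_deriv_le_of_travelingWave {B : ℝ} (hd : ∀ i, d i ≠ 0)
    (hp_C2 : ∀ i, ContDiff ℝ 2 (fun ξ => p ξ i)) (hB : ∀ ξ i, |p ξ i| ≤ B)
    (hp_eq : ∀ ξ i, -(d i) * deriv (deriv (fun x => p x i)) ξ - c * deriv (fun x => p x i) ξ
      = reaction M C (p ξ) i) :
    ∃ L : n → ℝ, ∀ ξ i, |deriv (fun x => p x i) ξ| ≤ L i := by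
  obtain ⟨K, hK⟩ := isCompact_Icc.exists_forall_norm_comp_le
    (continuous_reaction M C).continuousOn fun ξ =>
      (⟨fun i => (abs_le.1 (hB ξ i)).1, fun i => (abs_le.1 (hB ξ i)).2⟩ :
        p ξ ∈ Icc (fun _ => -B) (fun _ => B))
  refine ⟨fun i => Real.exp |c / d i| * (2 * B + K / |d i|), fun ξ i =>
    abs_deriv_le_of_abs_le_of_abs_forcing_le (hd i) ((hp_C2 i).differentiable (by norm_num))
      (hp_C2 i).differentiable_deriv_two (fun ξ => hB ξ i) (fun ξ => ?_) ξ⟩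
  rw [← abs_neg, neg_add', ← neg_mul, hp_eq]
  exact (norm_le_pi_norm _ i).trans (hK ξ)

theorem sum_forcing_mul_one_sub_inv_nonneg_of_travelingWave (hM : ∀ i j, i ≠ j → 0 ≤ M i j)
    (hrow : ∀ i, ∑ j, M i j = 0) (hcol : ∀ j, ∑ i, M i j = 0) (hC : ∀ v, 0 ≤ v ⬝ᵥ C *ᵥ v)
    (hC_row : ∀ i, ∑ j, C i j = 1) {ξ : ℝ} (hpos : ∀ i, 0 < p ξ i)
    (hp_eq : ∀ i, -(d i) * deriv (deriv (fun x => p x i)) ξ - c * deriv (fun x => p x i) ξ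
      = reaction M C (p ξ) i) :
    0 ≤ ∑ i, (d i * deriv (deriv fun x => p x i) ξ + c * deriv (fun x => p x i) ξ)
      * (1 - (p ξ i)⁻¹) := by
  have hforcing : ∀ i, d i * deriv (deriv fun x => p x i) ξ + c * deriv (fun x => p x i) ξ
      = -reaction M C (p ξ) i := fun i => by linarith [hp_eq i]
  simp only [hforcing, neg_mul, Finset.sum_neg_distrib, neg_nonneg]
  exact sum_reaction_mul_one_sub_inv_nonpos M C hM hrow hcol hC hC_row (p ξ) hpos

end TravelingWave

theorem div_sq_mul_sq_le_sum_mul_div_sq {n : Type*} [Fintype n] {d u v : n → ℝ} {B : ℝ}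
    {k : n} (hd : ∀ i, 0 ≤ d i) (hu : 0 < u k) (huB : u k ≤ B) :
    d k / B ^ 2 * v k ^ 2 ≤ ∑ i, d i * (v i / u i) ^ 2 := by
  calc d k / B ^ 2 * v k ^ 2 = d k * v k ^ 2 / B ^ 2 := by ring
    _ ≤ d k * v k ^ 2 / u k ^ 2 := by
      have := hd k
      gcongr
    _ = d k * (v k / u k) ^ 2 := by ring
    _ ≤ ∑ i, d i * (v i / u i) ^ 2 :=
      Finset.single_le_sum (f := fun i => d i * (v i / u i) ^ 2)
        (fun i _ => mul_nonneg (hd i) (sq_nonneg _)) (Finset.mem_univ k)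

theorem stmt8_general {N : ℕ}
    (M C : Matrix (Fin N) (Fin N) ℝ) (d : Fin N → ℝ) (hd : ∀ i, 0 < d i)
    -- (A1)
    (hM_offdiag : ∀ i j, i ≠ j → 0 ≤ M i j)
    (hM_lss : ∀ i, ∑ j, M i j = ∑ j, M j i)
    (hM_row : ∀ i, ∑ j, M i j = 0)
    -- (A2)
    (hC_normal : C * Cᵀ = Cᵀ * C)
    (hC_row : ∀ i, ∑ j, C i j = 1)
    -- (A3)
    (hC_spec : ∀ μ ∈ spectrum ℂ (C.map (algebraMap ℝ ℂ)), 0 ≤ μ.re)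
    (c : ℝ) (p : ℝ → Fin N → ℝ)
    (hp_C2 : ∀ i, ContDiff ℝ 2 (fun ξ => p ξ i))
    (hp_bdd : ∃ B : ℝ, ∀ ξ i, |p ξ i| ≤ B)
    (hp_inf : ∃ m > 0, ∀ ξ i, m ≤ p ξ i)
    (hp_eq : ∀ ξ i,
      -(d i) * deriv (deriv (fun x => p x i)) ξ - c * deriv (fun x => p x i) ξ
        = M.mulVec (p ξ) i + p ξ i - p ξ i * C.mulVec (p ξ) i) :
    ∀ i, MemLp (deriv (fun x => p x i)) 2 (volume : Measure ℝ) := by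
  obtain ⟨B, hB⟩ := hp_bdd
  obtain ⟨m, hm, hmp⟩ := hp_inf
  have hpos : ∀ ξ i, 0 < p ξ i := fun ξ i => hm.trans_le (hmp ξ i)
  have hpB : ∀ ξ i, p ξ i ≤ B := fun ξ i => (le_abs_self _).trans (hB ξ i)
  have hcol : ∀ j, ∑ i, M i j = 0 := fun j => hM_lss j ▸ hM_row j
  obtain ⟨L, hL⟩ := exists_abs_deriv_le_of_travelingWave (fun i => (hd i).ne') hp_C2 hB hp_eq
  obtain ⟨K, hK⟩ := exists_forall_abs_lyapunov_le d c hm hmp hpB hL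
  have hG := fun x => hasDerivAt_lyapunov d c
    (fun i => (hp_C2 i).differentiable (by norm_num) x)
    (fun i => (hp_C2 i).differentiable_deriv_two x) fun i => (hpos x i).ne'
  have hdiss := fun x => sum_forcing_mul_one_sub_inv_nonneg_of_travelingWave hM_offdiag hM_row
    hcol (dotProduct_mulVec_nonneg_of_normal C hC_normal hC_spec) hC_row (hpos x) (hp_eq x)
  intro k
  have hk_cont : Continuous (deriv fun y => p y k) := (hp_C2 k).continuous_deriv one_le_two
  have hφ : Integrable fun x => d k / B ^ 2 * deriv (fun y => p y k) x ^ 2 :=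
    integrable_of_le_deriv_of_abs_le (by fun_prop)
      (fun x => mul_nonneg (div_nonneg (hd k).le (sq_nonneg _)) (sq_nonneg _)) hG
      (fun x => (div_sq_mul_sq_le_sum_mul_div_sq (v := fun i => deriv (fun y => p y i) x)
        (fun i => (hd i).le) (hpos x k) (hpB x k)).trans (le_add_of_nonneg_right (hdiss x))) hK
  have hB0 : 0 < B := (hpos 0 k).trans_le (hpB 0 k)
  rw [memLp_two_iff_integrable_sq hk_cont.aestronglyMeasurable]
  exact (integrable_const_mul_iff (div_pos (hd k) (pow_pos hB0 2)).ne'.isUnit _).1 hφ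

theorem stmt8 {N : ℕ} (hN : 2 ≤ N)
    (M C : Matrix (Fin N) (Fin N) ℝ) (d : Fin N → ℝ) (hd : ∀ i, 0 < d i)
    -- (A1)
    (hM_offdiag : ∀ i j, i ≠ j → 0 ≤ M i j)
    (hM_irr : MatrixIrreducible M)
    (hM_lss : ∀ i, ∑ j, M i j = ∑ j, M j i)
    (hM_row : ∀ i, ∑ j, M i j = 0)
    -- (A2)
    (hC_pos : ∀ i j, 0 < C i j)
    (hC_normal : C * Cᵀ = Cᵀ * C)
    (hC_row : ∀ i, ∑ j, C i j = 1)
    -- (A3)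
    (hC_spec : ∀ μ ∈ spectrum ℂ (C.map (algebraMap ℝ ℂ)), 0 ≤ μ.re)
    (c : ℝ) (p : ℝ → Fin N → ℝ)
    (hp_C2 : ∀ i, ContDiff ℝ 2 (fun ξ => p ξ i))
    (hp_bdd : ∃ B : ℝ, ∀ ξ i, |p ξ i| ≤ B)
    (hp_inf : ∃ m > 0, ∀ ξ i, m ≤ p ξ i)
    (hp_eq : ∀ ξ i,
      -(d i) * deriv (deriv (fun x => p x i)) ξ - c * deriv (fun x => p x i) ξ
        = M.mulVec (p ξ) i + p ξ i - p ξ i * C.mulVec (p ξ) i) :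
    ∀ i, MemLp (deriv (fun x => p x i)) 2 (volume : Measure ℝ) :=
  stmt8_general M C d hd hM_offdiag hM_lss hM_row hC_normal hC_row hC_spec c p hp_C2 hp_bdd hp_inf
    hp_eq
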